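/- arXiv:1911.06444 — 2 statements merged into one kernel-verified Lean document; each statement's English description precedes it below -/
import Mathlib

section
/- Let sigma_X, sigma_Y, lambda_a, lambda_b > 0, set lambda^2 = lambda_a^2 + lambda_b^2, and suppose sigma^2 = lambda_a^2 sigma_X^2 + lambda_b^2 sigma_Y^2 + v_D + v_L where v_D, v_L \ge 0 and |sigma_X^2 - sigma_Y^2| \le (v_D + v_L)/max(lambda_a^2, lambda_b^2). Then |lambda \sigma_X - \sigma| \le 2\sqrt{v_D + v_L}. -/
theorem stmt_4 (sigmaX sigmaY lamA lamB : ℝ) (vD vL : ℝ)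
    (hsX : 0 < sigmaX) (hsY : 0 < sigmaY) (hA : 0 < lamA) (hB : 0 < lamB)
    (hvD : 0 ≤ vD) (hvL : 0 ≤ vL)
    (lam sigma : ℝ)
    (hlam : lam = Real.sqrt (lamA ^ 2 + lamB ^ 2))
    (hsigma : sigma = Real.sqrt (lamA ^ 2 * sigmaX ^ 2 + lamB ^ 2 * sigmaY ^ 2 + vD + vL))
    (hdiff : |sigmaX ^ 2 - sigmaY ^ 2| ≤ (vD + vL) / max (lamA ^ 2) (lamB ^ 2)) :
    |lam * sigmaX - sigma| ≤ 2 * Real.sqrt (vD + vL) := by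
  set v : ℝ := vD + vL with hv
  have hv0 : 0 ≤ v := by positivity
  have hm : (0:ℝ) < max (lamA ^ 2) (lamB ^ 2) := lt_max_of_lt_left (by positivity)
  have hlam2 : lam ^ 2 = lamA ^ 2 + lamB ^ 2 := by
    rw [hlam]; exact Real.sq_sqrt (by positivity)
  have hs2 : sigma ^ 2 = lamA ^ 2 * sigmaX ^ 2 + lamB ^ 2 * sigmaY ^ 2 + vD + vL := by
    rw [hsigma]; exact Real.sq_sqrt (by positivity)
  have hlam0 : 0 ≤ lam := hlam ▸ Real.sqrt_nonneg _
  have hs0 : 0 ≤ sigma := hsigma ▸ Real.sqrt_nonneg _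
  have hx : |lamB ^ 2 * (sigmaX ^ 2 - sigmaY ^ 2)| ≤ v := by
    rw [abs_mul, abs_of_nonneg (by positivity : (0:ℝ) ≤ lamB ^ 2)]
    calc lamB ^ 2 * |sigmaX ^ 2 - sigmaY ^ 2|
        ≤ max (lamA ^ 2) (lamB ^ 2) * (v / max (lamA ^ 2) (lamB ^ 2)) := by
          apply mul_le_mul (le_max_right _ _) hdiff (abs_nonneg _) hm.le
      _ = v := by field_simp
  have key : |(lam * sigmaX) ^ 2 - sigma ^ 2| ≤ 2 * v := by
    have h1 : (lam * sigmaX) ^ 2 - sigma ^ 2 = lamB ^ 2 * (sigmaX ^ 2 - sigmaY ^ 2) - v := by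
      rw [mul_pow, hlam2, hs2, hv]; ring
    rw [h1]
    have := abs_le.mp hx
    rw [abs_le]; constructor <;> linarith
  have hsq : (lam * sigmaX - sigma) ^ 2 ≤ 2 * v := by
    rcases le_total sigma (lam * sigmaX) with h | h
    · have habs : |(lam * sigmaX) ^ 2 - sigma ^ 2| = (lam * sigmaX) ^ 2 - sigma ^ 2 :=
        abs_of_nonneg (by nlinarith [mul_nonneg hlam0 hsX.le])
      nlinarith [mul_nonneg hs0 (sub_nonneg.mpr h)]
    · have habs : |(lam * sigmaX) ^ 2 - sigma ^ 2| = -((lam * sigmaX) ^ 2 - sigma ^ 2) :=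
        abs_of_nonpos (by nlinarith [mul_nonneg hlam0 hsX.le])
      nlinarith [mul_nonneg (mul_nonneg hlam0 hsX.le) (sub_nonneg.mpr h)]
  have h2 : |lam * sigmaX - sigma| ≤ Real.sqrt (2 * v) := by
    rw [← Real.sqrt_sq_eq_abs]
    exact Real.sqrt_le_sqrt hsq
  have h3 : Real.sqrt (2 * v) ≤ 2 * Real.sqrt v := by
    rw [show (2 : ℝ) * Real.sqrt v = Real.sqrt 4 * Real.sqrt v by
          rw [show (4:ℝ) = 2 ^ 2 by norm_num, Real.sqrt_sq (by norm_num)],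
        ← Real.sqrt_mul (by norm_num)]
    exact Real.sqrt_le_sqrt (by linarith)
  exact h2.trans h3
end

section
/- Let xi_1, ..., xi_m be independent mean-zero random variables with finite nonzero variances, let c_1, ..., c_m be real numbers with \sum_i c_i^2 = 1, and set W = \sum_i c_i xi_i. Let xi_i^* have the xi_i-zero biased distribution, independent of the other variables, and let I be a random index independent of everything with P(I = i) = c_i^2 Var(xi_i)/Var(W) renormalized so that \sum c_i^2 E xi_i^2 is the total variance. If Var(W)=1 and P(I=i) = c_i^2 E xi_i^2, then W^* = W - c_I xi_I + c_I xi_I^* has the W-zero biased distribution. -/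
open MeasureTheory ProbabilityTheory

/-- `Wstar` has the `W`-zero biased distribution: for all absolutely continuous
(here: differentiable) `f` with `E|W f(W)| < ∞`,
`E[W f(W)] = Var(W) E[f'(W*)]`. -/
def IsZeroBiased {Ω : Type*} [MeasurableSpace Ω] (μ : Measure Ω) (W Wstar : Ω → ℝ) : Prop :=
  ∀ f : ℝ → ℝ, Differentiable ℝ f →
    Integrable (fun ω => W ω * f (W ω)) μ →
    Integrable (fun ω => deriv f (Wstar ω)) μ →
    ∫ ω, W ω * f (W ω) ∂μ = variance W μ * ∫ ω, deriv f (Wstar ω) ∂μ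

/-- Index type for the joint family `(I, ξ₁,…,ξ_m, ξ₁*,…,ξ_m*)`. -/
def ZBIdx (m : ℕ) : Option (Fin m ⊕ Fin m) → Type
  | none => Fin m
  | some _ => ℝ

instance (m : ℕ) (o : Option (Fin m ⊕ Fin m)) : MeasurableSpace (ZBIdx m o) := by
  cases o with
  | none => exact (inferInstance : MeasurableSpace (Fin m))
  | some _ => exact (inferInstance : MeasurableSpace ℝ)

/-- The joint family of random variables. -/
def ZBFam {Ω : Type*} (m : ℕ) (ξ ξs : Fin m → Ω → ℝ) (I : Ω → Fin m) :
    (o : Option (Fin m ⊕ Fin m)) → Ω → ZBIdx m o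
  | none => I
  | some (Sum.inl i) => ξ i
  | some (Sum.inr i) => ξs i

open Filter Topology

/-!
Write `W = Vᵢ + cᵢ ξᵢ`, where `Vᵢ = ∑_{j ≠ i} c_j ξ_j` is independent of `ξᵢ` and of `ξᵢ*`.
For bounded `f`, conditioning on `Vᵢ` (Fubini over the product law) and applying the zero-bias
identity of `ξᵢ` to `x ↦ f (v + cᵢ x)` gives
`cᵢ E[ξᵢ f(W)] = cᵢ² Var(ξᵢ) E[f'(Vᵢ + cᵢ ξᵢ*)] = P(I = i) E[f'(Vᵢ + cᵢ ξᵢ*)]`,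
and summing over `i` uses the independence of `I` to assemble `E[f'(W*)]`.
A general `f` is the limit of the bounded `f / (1 + t² f²)` as `t → 0`, whose derivatives are
dominated by `|f'|`, so dominated convergence removes the boundedness assumption.
-/

noncomputable def softClip (t y : ℝ) : ℝ := y / (1 + (t * y) ^ 2)

noncomputable def softClipDeriv (t y : ℝ) : ℝ := (1 - (t * y) ^ 2) / (1 + (t * y) ^ 2) ^ 2

lemma hasDerivAt_softClip (t y : ℝ) : HasDerivAt (softClip t) (softClipDeriv t y) y := by
  have hden : HasDerivAt (fun y => 1 + (t * y) ^ 2) (2 * (t * y) * t) y := by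
    simpa using ((hasDerivAt_id y).const_mul t).pow 2 |>.const_add 1
  have h : HasDerivAt (softClip t)
      ((1 * (1 + (t * y) ^ 2) - y * (2 * (t * y) * t)) / (1 + (t * y) ^ 2) ^ 2) y :=
    (hasDerivAt_id' y).div hden (by positivity)
  convert h using 1
  rw [softClipDeriv]
  ring

lemma abs_softClip_le (t y : ℝ) : |softClip t y| ≤ |y| := by
  have hden : 1 ≤ 1 + (t * y) ^ 2 := le_add_of_nonneg_right (sq_nonneg _)
  rw [softClip, abs_div, abs_of_pos (zero_lt_one.trans_le hden)]
  exact div_le_self (abs_nonneg y) hden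

lemma abs_softClip_le_inv {t : ℝ} (ht : 0 < t) (y : ℝ) : |softClip t y| ≤ t⁻¹ := by
  have hden : 0 < 1 + (t * y) ^ 2 := by positivity
  rw [softClip, abs_div, abs_of_pos hden, div_le_iff₀ hden, ← div_eq_inv_mul, le_div_iff₀ ht]
  have h : (t * y) ^ 2 = (t * |y|) ^ 2 := by rw [mul_pow, mul_pow, sq_abs]
  nlinarith [sq_nonneg (t * |y| - 1)]

lemma abs_softClipDeriv_le_one (t y : ℝ) : |softClipDeriv t y| ≤ 1 := by
  have hu := sq_nonneg (t * y)
  have hden : 0 < (1 + (t * y) ^ 2) ^ 2 := by positivity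
  rw [softClipDeriv, abs_div, abs_of_pos hden, div_le_one hden, abs_le]
  constructor <;> nlinarith

lemma continuous_softClip (y : ℝ) : Continuous fun t => softClip t y := by
  unfold softClip
  exact continuous_const.div (by fun_prop) fun t => by positivity

lemma continuous_softClipDeriv (y : ℝ) : Continuous fun t => softClipDeriv t y := by
  unfold softClipDeriv
  exact (by fun_prop : Continuous fun t : ℝ => 1 - (t * y) ^ 2).div (by fun_prop)
    fun t => by positivity

lemma softClip_zero (y : ℝ) : softClip 0 y = y := by simp [softClip]

lemma softClipDeriv_zero (y : ℝ) : softClipDeriv 0 y = 1 := by simp [softClipDeriv]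

theorem isZeroBiased_of_bounded {Ω : Type*} [MeasurableSpace Ω] {μ : Measure Ω} {X Xs : Ω → ℝ}
    (hX : Measurable X) (hXs : Measurable Xs)
    (h : ∀ f : ℝ → ℝ, Differentiable ℝ f → (∃ C, ∀ x, |f x| ≤ C) →
      Integrable (fun ω => deriv f (Xs ω)) μ →
      ∫ ω, X ω * f (X ω) ∂μ = variance X μ * ∫ ω, deriv f (Xs ω) ∂μ) :
    IsZeroBiased μ X Xs := by
  intro f hf hXf hfXs
  set t : ℕ → ℝ := fun n => 1 / (n + 1)
  have ht : ∀ n, 0 < t n := fun n => by positivity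
  have ht0 : Tendsto t atTop (𝓝 0) := tendsto_one_div_add_atTop_nhds_zero_nat
  set F : ℕ → ℝ → ℝ := fun n x => softClip (t n) (f x)
  have hFderiv : ∀ n x, HasDerivAt (F n) (softClipDeriv (t n) (f x) * deriv f x) x := fun n x =>
    (hasDerivAt_softClip (t n) (f x)).comp x (hf x).hasDerivAt
  have hFdiff : ∀ n, Differentiable ℝ (F n) := fun n x => (hFderiv n x).differentiableAt
  have hFderiv_le : ∀ n ω, ‖deriv (F n) (Xs ω)‖ ≤ ‖deriv f (Xs ω)‖ := fun n ω => by
    rw [(hFderiv n _).deriv, norm_mul]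
    exact mul_le_of_le_one_left (norm_nonneg _) (abs_softClipDeriv_le_one _ _)
  have hFint : ∀ n, Integrable (fun ω => deriv (F n) (Xs ω)) μ := fun n =>
    hfXs.norm.mono' ((measurable_deriv _).comp hXs).aestronglyMeasurable
      (ae_of_all _ (hFderiv_le n))
  have hlhs : Tendsto (fun n => ∫ ω, X ω * F n (X ω) ∂μ) atTop (𝓝 (∫ ω, X ω * f (X ω) ∂μ)) := by
    refine tendsto_integral_of_dominated_convergence _
      (fun n => (hX.mul ((hFdiff n).continuous.measurable.comp hX)).aestronglyMeasurable)
      hXf.norm (fun n => ae_of_all _ fun ω => ?_) (ae_of_all _ fun ω => ?_)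
    · rw [norm_mul, norm_mul]
      exact mul_le_mul_of_nonneg_left (abs_softClip_le _ _) (norm_nonneg _)
    · have := ((continuous_softClip (f (X ω))).tendsto 0).comp ht0
      rw [softClip_zero] at this
      exact this.const_mul (X ω)
  have hrhs : Tendsto (fun n => ∫ ω, deriv (F n) (Xs ω) ∂μ) atTop
      (𝓝 (∫ ω, deriv f (Xs ω) ∂μ)) := by
    refine tendsto_integral_of_dominated_convergence _ (fun n => (hFint n).aestronglyMeasurable)
      hfXs.norm (fun n => ae_of_all _ (hFderiv_le n)) (ae_of_all _ fun ω => ?_)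
    have := (((continuous_softClipDeriv (f (Xs ω))).tendsto 0).comp ht0).mul_const (deriv f (Xs ω))
    rw [softClipDeriv_zero, one_mul] at this
    exact this.congr fun n => ((hFderiv n _).deriv).symm
  refine tendsto_nhds_unique hlhs ?_
  refine (hrhs.const_mul (variance X μ)).congr fun n => ?_
  exact (h (F n) (hFdiff n) ⟨(t n)⁻¹, fun x => abs_softClip_le_inv (ht n) _⟩ (hFint n)).symm

lemma measurable_iSup_comap_of_mem {Ω ι : Type*} {κ : ι → Type*}
    [mκ : ∀ i, MeasurableSpace (κ i)]
    (f : ∀ i, Ω → κ i) {S : Set ι} {i : ι} (hi : i ∈ S) :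
    Measurable[⨆ j ∈ S, (mκ j).comap (f j)] (f i) :=
  measurable_iff_comap_le.mpr (le_iSup₂ (f := fun j (_ : j ∈ S) => (mκ j).comap (f j)) i hi)

section Independence

variable {Ω α β : Type*} [MeasurableSpace Ω] [MeasurableSpace α] [MeasurableSpace β]
  {μ : Measure Ω}

namespace ProbabilityTheory

lemma iIndepFun.indepFun_of_measurable_iSup {ι γ δ : Type*} {κ : ι → Type*}
    [mκ : ∀ i, MeasurableSpace (κ i)] [MeasurableSpace γ] [MeasurableSpace δ]
    {f : ∀ i, Ω → κ i} (h : iIndepFun f μ) (hf : ∀ i, Measurable (f i))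
    {S T : Set ι} (hST : Disjoint S T) {V : Ω → γ} {Y : Ω → δ}
    (hV : Measurable[⨆ i ∈ S, (mκ i).comap (f i)] V)
    (hY : Measurable[⨆ i ∈ T, (mκ i).comap (f i)] Y) : IndepFun V Y μ := by
  rw [IndepFun_iff_Indep]
  exact indep_of_indep_of_le_right
    (indep_of_indep_of_le_left (indep_iSup_of_disjoint (fun i => (hf i).comap_le) h hST)
      hV.comap_le) hY.comap_le

section IndepPair

variable [IsFiniteMeasure μ] {V : Ω → α} {Y : Ω → β} {g : α × β → ℝ}

lemma IndepFun.integrable_map_prod (hV : Measurable V) (hY : Measurable Y)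
    (h : IndepFun V Y μ) (hg : Measurable g) (hint : Integrable (fun ω => g (V ω, Y ω)) μ) :
    Integrable g ((μ.map V).prod (μ.map Y)) := by
  rw [← (indepFun_iff_map_prod_eq_prod_map_map hV.aemeasurable hY.aemeasurable).mp h]
  exact (integrable_map_measure hg.aestronglyMeasurable (hV.prodMk hY).aemeasurable).mpr hint

lemma IndepFun.ae_integrable_comp_right (hV : Measurable V) (hY : Measurable Y)
    (h : IndepFun V Y μ) (hg : Measurable g) (hint : Integrable (fun ω => g (V ω, Y ω)) μ) :
    ∀ᵐ v ∂μ.map V, Integrable (fun ω => g (v, Y ω)) μ := by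
  filter_upwards [(h.integrable_map_prod hV hY hg hint).prod_right_ae] with v hv
  exact (integrable_map_measure (hg.comp measurable_prodMk_left).aestronglyMeasurable
    hY.aemeasurable).mp hv

lemma IndepFun.integral_comp_eq_integral_integral (hV : Measurable V) (hY : Measurable Y)
    (h : IndepFun V Y μ) (hg : Measurable g) (hint : Integrable (fun ω => g (V ω, Y ω)) μ) :
    ∫ ω, g (V ω, Y ω) ∂μ = ∫ v, ∫ ω, g (v, Y ω) ∂μ ∂μ.map V := by
  rw [← integral_map (hV.prodMk hY).aemeasurable hg.aestronglyMeasurable,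
    (indepFun_iff_map_prod_eq_prod_map_map hV.aemeasurable hY.aemeasurable).mp h,
    integral_prod _ (h.integrable_map_prod hV hY hg hint)]
  congr with v
  exact integral_map hY.aemeasurable (hg.comp measurable_prodMk_left).aestronglyMeasurable

end IndepPair

section RandomIndex

variable {ι : Type*} [MeasurableSpace ι] [MeasurableSingletonClass ι] {I : Ω → ι} {Q : Ω → β}

lemma integral_eq_sum_setIntegral_preimage [Fintype ι] (hI : Measurable I) {F : Ω → ℝ}
    (hF : Integrable F μ) : ∫ ω, F ω ∂μ = ∑ i, ∫ ω in I ⁻¹' {i}, F ω ∂μ := by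
  have hcover : (⋃ i, I ⁻¹' {i}) = Set.univ := by ext; simp
  rw [← integral_iUnion_fintype (fun i => hI (measurableSet_singleton i))
    (pairwise_disjoint_fiber I) (fun i => hF.integrableOn), hcover, setIntegral_univ]

lemma IndepFun.map_restrict_preimage_singleton (hQ : Measurable Q)
    (h : IndepFun I Q μ) (i : ι) :
    (μ.restrict (I ⁻¹' {i})).map Q = μ (I ⁻¹' {i}) • μ.map Q := by
  ext B hB
  rw [Measure.map_apply hQ hB, Measure.restrict_apply (hQ hB), Measure.smul_apply,
    Measure.map_apply hQ hB, smul_eq_mul, Set.inter_comm]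
  exact h.measure_inter_preimage_eq_mul {i} B (measurableSet_singleton i) hB

lemma IndepFun.setIntegral_preimage_singleton [IsFiniteMeasure μ] (hQ : Measurable Q)
    (h : IndepFun I Q μ) (i : ι) {g : β → ℝ} (hg : Measurable g) :
    ∫ ω in I ⁻¹' {i}, g (Q ω) ∂μ = μ.real (I ⁻¹' {i}) * ∫ ω, g (Q ω) ∂μ := by
  rw [← integral_map hQ.aemeasurable hg.aestronglyMeasurable,
    h.map_restrict_preimage_singleton hQ i, integral_smul_measure,
    integral_map hQ.aemeasurable hg.aestronglyMeasurable, smul_eq_mul, measureReal_def]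

lemma IndepFun.integrable_of_integrableOn_preimage_singleton [IsFiniteMeasure μ]
    (hQ : Measurable Q) (h : IndepFun I Q μ) {i : ι} (hi : μ (I ⁻¹' {i}) ≠ 0) {g : β → ℝ}
    (hg : Measurable g) (hint : IntegrableOn (fun ω => g (Q ω)) (I ⁻¹' {i}) μ) :
    Integrable (fun ω => g (Q ω)) μ := by
  have hmap := (integrable_map_measure hg.aestronglyMeasurable hQ.aemeasurable).mpr hint
  rw [h.map_restrict_preimage_singleton hQ i,
    integrable_smul_measure hi (measure_ne_top μ _)] at hmap
  exact (integrable_map_measure hg.aestronglyMeasurable hQ.aemeasurable).mp hmap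

end RandomIndex

lemma IsZeroBiased.integral_mul_comp_add [IsFiniteMeasure μ] {X Xs V : Ω → ℝ}
    (hzb : IsZeroBiased μ X Xs) (hX : Measurable X) (hXs : Measurable Xs) (hV : Measurable V)
    (hXint : Integrable X μ) (hVX : IndepFun V X μ) (hVXs : IndepFun V Xs μ) {f : ℝ → ℝ}
    (hf : Differentiable ℝ f) {C : ℝ} (hC : ∀ x, |f x| ≤ C) (a : ℝ)
    (hint : Integrable (fun ω => deriv f (V ω + a * Xs ω)) μ) :
    ∫ ω, X ω * f (V ω + a * X ω) ∂μ
      = variance X μ * a * ∫ ω, deriv f (V ω + a * Xs ω) ∂μ := by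
  have hXf : ∀ Z : Ω → ℝ, Measurable Z → Integrable (fun ω => X ω * f (Z ω)) μ := fun Z hZ =>
    hXint.mul_bdd (hf.continuous.measurable.comp hZ).aestronglyMeasurable
      (ae_of_all _ fun ω => (Real.norm_eq_abs _).trans_le (hC _))
  have hfiber : ∀ v : ℝ, Integrable (fun ω => deriv f (v + a * Xs ω)) μ →
      ∫ ω, X ω * f (v + a * X ω) ∂μ = variance X μ * a * ∫ ω, deriv f (v + a * Xs ω) ∂μ := by
    intro v hv
    have hderiv : ∀ x, deriv (fun x => f (v + a * x)) x = a * deriv f (v + a * x) := by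
      intro x
      have hlin : HasDerivAt (fun x : ℝ => v + a * x) a x := by
        simpa using ((hasDerivAt_id x).const_mul a).const_add v
      have hcomp := (hf (v + a * x)).hasDerivAt.comp x hlin
      rw [Function.comp_def] at hcomp
      rw [hcomp.deriv, mul_comm]
    rw [hzb (fun x => f (v + a * x)) (by fun_prop)
      (hXf _ (measurable_const.add (hX.const_mul a))) (by simpa only [hderiv] using hv.const_mul a)]
    simp only [hderiv, integral_const_mul, mul_assoc]
  have hg₁ : Measurable fun p : ℝ × ℝ => p.2 * f (p.1 + a * p.2) :=
    measurable_snd.mul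
      (hf.continuous.measurable.comp (measurable_fst.add (measurable_snd.const_mul a)))
  have hg₂ : Measurable fun p : ℝ × ℝ => deriv f (p.1 + a * p.2) :=
    (measurable_deriv f).comp (measurable_fst.add (measurable_snd.const_mul a))
  calc ∫ ω, X ω * f (V ω + a * X ω) ∂μ
      = ∫ v, ∫ ω, X ω * f (v + a * X ω) ∂μ ∂μ.map V :=
        hVX.integral_comp_eq_integral_integral hV hX hg₁ (hXf _ (hV.add (hX.const_mul a)))
    _ = ∫ v, variance X μ * a * ∫ ω, deriv f (v + a * Xs ω) ∂μ ∂μ.map V := by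
        refine integral_congr_ae ?_
        filter_upwards [hVXs.ae_integrable_comp_right hV hXs hg₂ hint] with v hv
        exact hfiber v hv
    _ = variance X μ * a * ∫ ω, deriv f (V ω + a * Xs ω) ∂μ := by
        rw [integral_const_mul, hVXs.integral_comp_eq_integral_integral hV hXs hg₂ hint]

end ProbabilityTheory

end Independence

section ZeroBiasedSum

variable {Ω : Type*} {m : ℕ} {ξ ξs : Fin m → Ω → ℝ} {I : Ω → Fin m}
  {S : Set (Option (Fin m ⊕ Fin m))}

lemma measurable_iSup_comap_zbFam_inl {j : Fin m} (hj : some (.inl j) ∈ S) :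
    Measurable[⨆ o ∈ S, MeasurableSpace.comap (ZBFam m ξ ξs I o) inferInstance] (ξ j) :=
  measurable_iSup_comap_of_mem (ZBFam m ξ ξs I) hj

lemma measurable_iSup_comap_zbFam_inr {j : Fin m} (hj : some (.inr j) ∈ S) :
    Measurable[⨆ o ∈ S, MeasurableSpace.comap (ZBFam m ξ ξs I o) inferInstance] (ξs j) :=
  measurable_iSup_comap_of_mem (ZBFam m ξ ξs I) hj

lemma measurable_iSup_comap_zbFam_none (h : none ∈ S) :
    Measurable[⨆ o ∈ S, MeasurableSpace.comap (ZBFam m ξ ξs I o) inferInstance] I :=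
  measurable_iSup_comap_of_mem (ZBFam m ξ ξs I) h

lemma measurable_iSup_comap_zbFam_sum_erase (c : Fin m → ℝ) {i : Fin m}
    (hS : ∀ j ≠ i, some (.inl j) ∈ S) :
    Measurable[⨆ o ∈ S, MeasurableSpace.comap (ZBFam m ξ ξs I o) inferInstance]
      fun ω => ∑ j ∈ Finset.univ.erase i, c j * ξ j ω :=
  Finset.measurable_sum _ fun j hj =>
    (measurable_iSup_comap_zbFam_inl (hS j (Finset.ne_of_mem_erase hj))).const_mul _

variable [MeasurableSpace Ω] {μ : Measure Ω}

lemma measurable_zbFam (hξ : ∀ i, Measurable (ξ i)) (hξs : ∀ i, Measurable (ξs i))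
    (hI : Measurable I) : ∀ o, Measurable (ZBFam m ξ ξs I o)
  | none => hI
  | some (.inl i) => hξ i
  | some (.inr i) => hξs i

variable (hξ : ∀ i, Measurable (ξ i)) (hξs : ∀ i, Measurable (ξs i)) (hI : Measurable I)
  (hindep : iIndepFun (ZBFam m ξ ξs I) μ) (c : Fin m → ℝ)
include hξ hξs hI hindep

lemma indepFun_sum_erase_inl (i : Fin m) :
    IndepFun (fun ω => ∑ j ∈ Finset.univ.erase i, c j * ξ j ω) (ξ i) μ :=
  hindep.indepFun_of_measurable_iSup (measurable_zbFam hξ hξs hI)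
    (S := {o | ∃ j ≠ i, o = some (.inl j)}) (T := {some (.inl i)}) (by simp)
    (measurable_iSup_comap_zbFam_sum_erase c fun j hj => ⟨j, hj, rfl⟩)
    (measurable_iSup_comap_zbFam_inl (Set.mem_singleton _))

lemma indepFun_sum_erase_inr (i : Fin m) :
    IndepFun (fun ω => ∑ j ∈ Finset.univ.erase i, c j * ξ j ω) (ξs i) μ :=
  hindep.indepFun_of_measurable_iSup (measurable_zbFam hξ hξs hI)
    (S := {o | ∃ j ≠ i, o = some (.inl j)}) (T := {some (.inr i)}) (by simp)
    (measurable_iSup_comap_zbFam_sum_erase c fun j hj => ⟨j, hj, rfl⟩)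
    (measurable_iSup_comap_zbFam_inr (Set.mem_singleton _))

lemma indepFun_index_sum_erase_add (i : Fin m) :
    IndepFun I (fun ω => ∑ j ∈ Finset.univ.erase i, c j * ξ j ω + c i * ξs i ω) μ :=
  hindep.indepFun_of_measurable_iSup (measurable_zbFam hξ hξs hI)
    (S := {none}) (T := Set.range some) (by simp)
    (measurable_iSup_comap_zbFam_none (Set.mem_singleton _))
    ((measurable_iSup_comap_zbFam_sum_erase c fun j _ => Set.mem_range_self _).add
      ((measurable_iSup_comap_zbFam_inr (Set.mem_range_self _)).const_mul _))

variable [IsFiniteMeasure μ] (hξint : ∀ i, Integrable (ξ i) μ)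
  (hmean : ∀ i, ∫ ω, ξ i ω ∂μ = 0) (hvarpos : ∀ i, 0 < variance (ξ i) μ)
  (hIdist : ∀ i, μ {ω | I ω = i} = ENNReal.ofReal (c i ^ 2 * ∫ ω, ξ i ω ^ 2 ∂μ))
  (hzb : ∀ i, IsZeroBiased μ (ξ i) (ξs i)) {f : ℝ → ℝ} (hf : Differentiable ℝ f) {C : ℝ}
  (hC : ∀ x, |f x| ≤ C)
  (hint : Integrable (fun ω =>
    deriv f (∑ j ∈ Finset.univ.erase (I ω), c j * ξ j ω + c (I ω) * ξs (I ω) ω)) μ)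
include hξint hmean hvarpos hIdist hzb hf hC hint

lemma mul_integral_mul_eq_measureReal_mul_integral_deriv (i : Fin m) :
    c i * ∫ ω, ξ i ω * f (∑ j, c j * ξ j ω) ∂μ
      = μ.real (I ⁻¹' {i}) *
        ∫ ω, deriv f (∑ j ∈ Finset.univ.erase i, c j * ξ j ω + c i * ξs i ω) ∂μ := by
  set V := fun ω => ∑ j ∈ Finset.univ.erase i, c j * ξ j ω
  have hV : Measurable V := Finset.measurable_sum _ fun j _ => (hξ j).const_mul _
  have hprob : μ.real (I ⁻¹' {i}) = c i ^ 2 * variance (ξ i) μ := by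
    rw [measureReal_def, show I ⁻¹' {i} = {ω | I ω = i} from rfl, hIdist,
      variance_of_integral_eq_zero (hξ i).aemeasurable (hmean i),
      ENNReal.toReal_ofReal (by positivity)]
  by_cases hci : c i = 0
  · simp [hprob, hci]
  have hpos : μ (I ⁻¹' {i}) ≠ 0 := fun h0 => by
    rw [measureReal_def, h0, ENNReal.toReal_zero] at hprob
    exact (mul_pos (pow_two_pos_of_ne_zero hci) (hvarpos i)).ne' hprob.symm
  have hQ : Measurable fun ω => V ω + c i * ξs i ω := hV.add ((hξs i).const_mul _)
  -- On the event `{I = i}`, of positive probability, `W*` is `Vᵢ + cᵢ ξᵢ*`.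
  have hQint : Integrable (fun ω => deriv f (V ω + c i * ξs i ω)) μ := by
    refine (indepFun_index_sum_erase_add hξ hξs hI hindep c i)
      |>.integrable_of_integrableOn_preimage_singleton hQ hpos (measurable_deriv f) ?_
    refine hint.integrableOn.congr_fun (fun ω hω => ?_) (hI (measurableSet_singleton i))
    rw [Set.mem_preimage, Set.mem_singleton_iff] at hω
    dsimp only
    rw [hω]
  have hsplit : ∀ ω, ∑ j, c j * ξ j ω = V ω + c i * ξ i ω := fun ω =>
    (Finset.sum_erase_add _ _ (Finset.mem_univ i)).symm
  simp only [hsplit]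
  rw [(hzb i).integral_mul_comp_add (hξ i) (hξs i) hV (hξint i)
    (indepFun_sum_erase_inl hξ hξs hI hindep c i) (indepFun_sum_erase_inr hξ hξs hI hindep c i)
    hf hC (c i) hQint, hprob]
  ring

theorem integral_sum_mul_eq_integral_deriv_of_bounded :
    ∫ ω, (∑ i, c i * ξ i ω) * f (∑ i, c i * ξ i ω) ∂μ
      = ∫ ω, deriv f (∑ j ∈ Finset.univ.erase (I ω), c j * ξ j ω + c (I ω) * ξs (I ω) ω) ∂μ := by
  set W := fun ω => ∑ i, c i * ξ i ω
  set V := fun i ω => ∑ j ∈ Finset.univ.erase i, c j * ξ j ω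
  have hW : Measurable W := Finset.measurable_sum _ fun j _ => (hξ j).const_mul _
  have hξf : ∀ i, Integrable (fun ω => ξ i ω * f (W ω)) μ := fun i =>
    (hξint i).mul_bdd (hf.continuous.measurable.comp hW).aestronglyMeasurable
      (ae_of_all _ fun ω => (Real.norm_eq_abs _).trans_le (hC _))
  calc ∫ ω, W ω * f (W ω) ∂μ = ∑ i, c i * ∫ ω, ξ i ω * f (W ω) ∂μ := by
        simp_rw [← integral_const_mul]
        rw [← integral_finsetSum _ fun i _ => (hξf i).const_mul (c i)]
        refine integral_congr_ae (ae_of_all _ fun ω => ?_)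
        show (∑ i, c i * ξ i ω) * f (W ω) = _
        simp only [Finset.sum_mul, mul_assoc]
    _ = ∑ i, ∫ ω in I ⁻¹' {i}, deriv f (V i ω + c i * ξs i ω) ∂μ := by
        refine Finset.sum_congr rfl fun i _ => ?_
        rw [mul_integral_mul_eq_measureReal_mul_integral_deriv hξ hξs hI hindep c hξint hmean
          hvarpos hIdist hzb hf hC hint]
        exact ((indepFun_index_sum_erase_add hξ hξs hI hindep c i).setIntegral_preimage_singleton
          ((Finset.measurable_sum _ fun j _ => (hξ j).const_mul _).add ((hξs i).const_mul _)) i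
          (measurable_deriv f)).symm
    _ = ∑ i, ∫ ω in I ⁻¹' {i}, deriv f (V (I ω) ω + c (I ω) * ξs (I ω) ω) ∂μ := by
        refine Finset.sum_congr rfl fun i _ =>
          setIntegral_congr_fun (hI (measurableSet_singleton i)) fun ω hω => ?_
        rw [Set.mem_preimage, Set.mem_singleton_iff] at hω
        rw [hω]
    _ = _ := (integral_eq_sum_setIntegral_preimage hI hint).symm

end ZeroBiasedSum

theorem stmt_5_general {Ω : Type*} [MeasurableSpace Ω] (μ : Measure Ω) [IsProbabilityMeasure μ]
    (m : ℕ) (c : Fin m → ℝ)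
    (ξ ξs : Fin m → Ω → ℝ) (I : Ω → Fin m)
    (hmeasξ : ∀ i, Measurable (ξ i)) (hmeasξs : ∀ i, Measurable (ξs i))
    (hmeasI : Measurable I)
    (hL2 : ∀ i, MemLp (ξ i) 2 μ)
    (hmean : ∀ i, ∫ ω, ξ i ω ∂μ = 0)
    (hvarpos : ∀ i, 0 < variance (ξ i) μ)
    (W : Ω → ℝ) (hW : W = fun ω => ∑ i, c i * ξ i ω)
    (hVarW : variance W μ = 1)
    -- the ξ i, the ξs i and the index I are all mutually independent
    (hindep : iIndepFun (ZBFam m ξ ξs I) μ)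
    (hI : ∀ i : Fin m, μ {ω | I ω = i} = ENNReal.ofReal ((c i) ^ 2 * ∫ ω, (ξ i ω) ^ 2 ∂μ))
    (hzb : ∀ i, IsZeroBiased μ (ξ i) (ξs i)) :
    IsZeroBiased μ W
      (fun ω => W ω - c (I ω) * ξ (I ω) ω + c (I ω) * ξs (I ω) ω) := by
  subst hW
  have hWs : (fun ω => ∑ i, c i * ξ i ω - c (I ω) * ξ (I ω) ω + c (I ω) * ξs (I ω) ω)
      = fun ω => ∑ j ∈ Finset.univ.erase (I ω), c j * ξ j ω + c (I ω) * ξs (I ω) ω := by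
    funext ω
    rw [← Finset.add_sum_erase _ _ (Finset.mem_univ (I ω))]
    ring
  have hmeasWs : Measurable
      fun ω => ∑ j ∈ Finset.univ.erase (I ω), c j * ξ j ω + c (I ω) * ξs (I ω) ω := by
    have hjoint : Measurable fun p : Ω × Fin m =>
        ∑ j ∈ Finset.univ.erase p.2, c j * ξ j p.1 + c p.2 * ξs p.2 p.1 :=
      measurable_from_prod_countable_left fun i =>
        show Measurable fun ω => ∑ j ∈ Finset.univ.erase i, c j * ξ j ω + c i * ξs i ω from
        (Finset.measurable_sum _ fun j _ => (hmeasξ j).const_mul _).add ((hmeasξs i).const_mul _)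
    exact hjoint.comp (measurable_id.prodMk hmeasI)
  rw [hWs]
  refine isZeroBiased_of_bounded (Finset.measurable_sum _ fun j _ => (hmeasξ j).const_mul _)
    hmeasWs fun f hf ⟨C, hC⟩ hint => ?_
  rw [hVarW, one_mul]
  exact integral_sum_mul_eq_integral_deriv_of_bounded hmeasξ hmeasξs hmeasI hindep c
    (fun i => (hL2 i).integrable one_le_two) hmean hvarpos hI hzb hf hC hint

theorem stmt_5 {Ω : Type*} [MeasurableSpace Ω] (μ : Measure Ω) [IsProbabilityMeasure μ]
    (m : ℕ) (hm : 1 ≤ m) (c : Fin m → ℝ)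
    (ξ ξs : Fin m → Ω → ℝ) (I : Ω → Fin m)
    (hmeasξ : ∀ i, Measurable (ξ i)) (hmeasξs : ∀ i, Measurable (ξs i))
    (hmeasI : Measurable I)
    (hL2 : ∀ i, MemLp (ξ i) 2 μ)
    (hmean : ∀ i, ∫ ω, ξ i ω ∂μ = 0)
    (hvarpos : ∀ i, 0 < variance (ξ i) μ)
    (hc : ∑ i, (c i) ^ 2 = 1)
    (W : Ω → ℝ) (hW : W = fun ω => ∑ i, c i * ξ i ω)
    (hVarW : variance W μ = 1)
    -- the ξ i, the ξs i and the index I are all mutually independent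
    (hindep : iIndepFun (ZBFam m ξ ξs I) μ)
    (hI : ∀ i : Fin m, μ {ω | I ω = i} = ENNReal.ofReal ((c i) ^ 2 * ∫ ω, (ξ i ω) ^ 2 ∂μ))
    (hzb : ∀ i, IsZeroBiased μ (ξ i) (ξs i)) :
    IsZeroBiased μ W
      (fun ω => W ω - c (I ω) * ξ (I ω) ω + c (I ω) * ξs (I ω) ω) :=
  stmt_5_general μ m c ξ ξs I hmeasξ hmeasξs hmeasI hL2 hmean hvarpos W hW hVarW hindep hI hzb
end
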